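/- arXiv:0704.2849 — 2 statements merged into one kernel-verified Lean document; each statement's English description precedes it below -/
import Mathlib

section
/- For a compact set X ⊆ ℂⁿ on which no nonzero polynomial vanishes identically, and for fixed M ≥ 1 and degree d, the extremal quantity λ_d := sup{|P(0)| : P polynomial of degree ≤ d, sup_X |P| ≤ 1} satisfies λ_d ≥ M^d if and only if there exist polynomials A_1, …, A_n with ζ₁A₁(ζ) + ⋯ + ζₙAₙ(ζ) of degree ≤ d and |1 - ∑_k ζ_k A_k(ζ)| ≤ M^{-d} for all ζ ∈ X. -/
open MvPolynomial

/-!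
Evaluation at `0` is a linear functional on the finite-dimensional space of polynomials of degree
`≤ d`, and since `S` is non-algebraic the sup norm over the compact set `S` is a norm there, so
`λ_d` is attained by some `P₀`. If `|P₀(0)| ≥ M^d`, then `1 - P₀ / P₀(0)` has no constant term,
hence is `∑ ζ_k A_k`, and it is `≤ M^{-d}` on `S`. Conversely `M^d (1 - ∑ ζ_k A_k)` is a competitor
with value `M^d` at `0`.
-/

theorem exists_norm_apply_le_of_injective {𝕜 E F G : Type*} [NontriviallyNormedField 𝕜]
    [ProperSpace 𝕜] [AddCommGroup E] [Module 𝕜 E] [FiniteDimensional 𝕜 E]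
    [NormedAddCommGroup F] [NormedSpace 𝕜 F] [NormedAddCommGroup G] [NormedSpace 𝕜 G]
    (ι : E →ₗ[𝕜] F) (hι : Function.Injective ι) (φ : E →ₗ[𝕜] G) :
    ∃ x₀, ‖ι x₀‖ ≤ 1 ∧ ∀ x, ‖ι x‖ ≤ 1 → ‖φ x‖ ≤ ‖φ x₀‖ := by
  let e := LinearEquiv.ofInjective ι hι
  have : ProperSpace (LinearMap.range ι) := FiniteDimensional.proper 𝕜 _
  have hψ : Continuous fun w => ‖φ (e.symm w)‖ :=
    (φ ∘ₗ e.symm.toLinearMap).continuous_of_finiteDimensional.norm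
  obtain ⟨w₀, hw₀, hmax⟩ := (isCompact_closedBall (0 : LinearMap.range ι) 1).exists_isMaxOn
    ⟨0, Metric.mem_closedBall_self zero_le_one⟩ hψ.continuousOn
  have hnorm : ∀ x, ‖e x‖ = ‖ι x‖ := fun x => rfl
  refine ⟨e.symm w₀, ?_, fun x hx => ?_⟩
  · simpa [← hnorm] using hw₀
  · simpa using hmax (show e x ∈ Metric.closedBall 0 1 by simpa [hnorm] using hx)

namespace MvPolynomial

variable {σ 𝕜 : Type*}

theorem exists_sum_X_mul_eq_of_constantCoeff_eq_zero {R : Type*} [CommSemiring R] [Fintype σ]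
    {p : MvPolynomial σ R} (hp : constantCoeff p = 0) :
    ∃ B : σ → MvPolynomial σ R, ∑ i, X i * B i = p := by
  have hmem : p ∈ idealOfVars σ R := by
    simpa using (mem_pow_idealOfVars_iff' 1 p).2 fun x hx => by
      rw [Nat.lt_one_iff, Finsupp.degree_eq_zero_iff] at hx
      simpa [hx, constantCoeff_eq] using hp
  obtain ⟨B, hB⟩ := Ideal.mem_span_range_iff_exists_fun.1 hmem
  exact ⟨B, by simpa only [mul_comm] using hB⟩

theorem eval_sum_X_mul {R : Type*} [CommSemiring R] [Fintype σ] (z : σ → R)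
    (A : σ → MvPolynomial σ R) : eval z (∑ k, X k * A k) = ∑ k, z k * eval z (A k) := by
  simp

section NormedField

variable [NormedField 𝕜]

noncomputable def toContinuousMapOnLinearMap (S : Set (σ → 𝕜)) :
    MvPolynomial σ 𝕜 →ₗ[𝕜] C(S, 𝕜) where
  toFun p := ⟨fun z => eval z.1 p, (continuous_eval p).comp continuous_subtype_val⟩
  map_add' p q := by ext; simp
  map_smul' c p := by ext; simp

theorem norm_toContinuousMapOnLinearMap_le_one_iff {S : Set (σ → 𝕜)} [CompactSpace S]
    (p : MvPolynomial σ 𝕜) :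
    ‖toContinuousMapOnLinearMap S p‖ ≤ 1 ↔ ∀ z ∈ S, ‖eval z p‖ ≤ 1 := by
  rw [ContinuousMap.norm_le _ zero_le_one, Subtype.forall]
  rfl

def unitBallEvalNorms (S : Set (σ → 𝕜)) (d : ℕ) (a : σ → 𝕜) : Set ℝ :=
  {r | ∃ P : MvPolynomial σ 𝕜,
    P.totalDegree ≤ d ∧ (∀ z ∈ S, ‖eval z P‖ ≤ 1) ∧ r = ‖eval a P‖}

theorem exists_norm_one_sub_sum_le_of_le_norm_eval_zero [Fintype σ]
    {S : Set (σ → 𝕜)} {d : ℕ} {P : MvPolynomial σ 𝕜} (hP : P.totalDegree ≤ d)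
    (hPS : ∀ z ∈ S, ‖eval z P‖ ≤ 1) {c : ℝ} (hc : 0 < c) (hcP : c ≤ ‖eval 0 P‖) :
    ∃ A : σ → MvPolynomial σ 𝕜, (∑ k, X k * A k).totalDegree ≤ d ∧
      ∀ z ∈ S, ‖1 - ∑ k, z k * eval z (A k)‖ ≤ 1 / c := by
  set a := eval 0 P
  have ha : a ≠ 0 := norm_pos_iff.1 (hc.trans_le hcP)
  obtain ⟨A, hA⟩ := exists_sum_X_mul_eq_of_constantCoeff_eq_zero (p := 1 - a⁻¹ • P) <| by
    rw [← eval_zero, map_sub, map_one, smul_eval, inv_mul_cancel₀ ha, sub_self]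
  refine ⟨A, ?_, fun z hz => ?_⟩
  · rw [hA]
    exact (totalDegree_sub _ _).trans (max_le (by simp) ((totalDegree_smul_le _ _).trans hP))
  · have h : 1 - ∑ k, z k * eval z (A k) = a⁻¹ * eval z P := by
      rw [← eval_sum_X_mul, hA]; simp [smul_eval]
    rw [h, norm_mul, norm_inv, one_div]
    calc ‖a‖⁻¹ * ‖eval z P‖ ≤ ‖a‖⁻¹ := mul_le_of_le_one_right (by positivity) (hPS z hz)
      _ ≤ c⁻¹ := inv_anti₀ hc hcP

end NormedField

theorem exists_isGreatest_unitBallEvalNorms [NontriviallyNormedField 𝕜] [ProperSpace 𝕜]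
    [Finite σ] {S : Set (σ → 𝕜)} (hS : IsCompact S)
    (hna : ∀ P : MvPolynomial σ 𝕜, (∀ z ∈ S, eval z P = 0) → P = 0) (d : ℕ) (a : σ → 𝕜) :
    ∃ r, IsGreatest (unitBallEvalNorms S d a) r := by
  have : CompactSpace S := isCompact_iff_compactSpace.mp hS
  let V := restrictTotalDegree σ 𝕜 d
  let ι := toContinuousMapOnLinearMap S ∘ₗ V.subtype
  have hι : Function.Injective ι := (injective_iff_map_eq_zero ι).2 fun P hP =>
    Subtype.ext <| hna P fun z hz => DFunLike.congr_fun hP ⟨z, hz⟩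
  obtain ⟨P₀, hP₀, hmax⟩ :=
    exists_norm_apply_le_of_injective ι hι ((aeval a).toLinearMap ∘ₗ V.subtype)
  refine ⟨_, ⟨P₀, (mem_restrictTotalDegree _ _ _).1 P₀.2,
    (norm_toContinuousMapOnLinearMap_le_one_iff _).1 hP₀, rfl⟩, ?_⟩
  rintro _ ⟨P, hP, hPS, rfl⟩
  simpa using hmax ⟨P, (mem_restrictTotalDegree _ _ _).2 hP⟩
    ((norm_toContinuousMapOnLinearMap_le_one_iff _).2 hPS)

theorem mem_unitBallEvalNorms_zero_of_norm_one_sub_sum_le [RCLike 𝕜] [Fintype σ]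
    {S : Set (σ → 𝕜)} {d : ℕ} {A : σ → MvPolynomial σ 𝕜} (hA : (∑ k, X k * A k).totalDegree ≤ d)
    {c : ℝ} (hc : 0 ≤ c) (hAS : ∀ z ∈ S, ‖1 - ∑ k, z k * eval z (A k)‖ ≤ 1 / c) :
    c ∈ unitBallEvalNorms S d 0 := by
  refine ⟨(c : 𝕜) • (1 - ∑ k, X k * A k), ?_, fun z hz => ?_, ?_⟩
  · exact (totalDegree_smul_le _ _).trans ((totalDegree_sub _ _).trans (max_le (by simp) hA))
  · rw [smul_eval, map_sub, map_one, eval_sum_X_mul, norm_mul, RCLike.norm_ofReal,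
      abs_of_nonneg hc]
    calc c * ‖1 - ∑ k, z k * eval z (A k)‖ ≤ c * (1 / c) :=
          mul_le_mul_of_nonneg_left (hAS z hz) hc
      _ ≤ 1 := by rw [mul_one_div]; exact div_self_le_one c
  · simp [abs_of_nonneg hc]

end MvPolynomial

/-- For a compact non-algebraic set S ⊆ ℂⁿ, M ≥ 1 and a fixed degree d,
λ_d = sup{|P(0)| : deg P ≤ d, sup_S |P| ≤ 1} satisfies λ_d ≥ M^d iff there
exist polynomials A₁,…,Aₙ with ∑ ζ_k A_k of degree ≤ d and
|1 - ∑ ζ_k A_k(ζ)| ≤ M^{-d} on S. -/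
theorem stmt_3 (n d : ℕ) (S : Set (Fin n → ℂ)) (hS : IsCompact S)
    (hna : ∀ P : MvPolynomial (Fin n) ℂ, (∀ z ∈ S, eval z P = 0) → P = 0)
    (M : ℝ) (hM : 1 ≤ M) :
    M ^ d ≤ sSup {r : ℝ | ∃ P : MvPolynomial (Fin n) ℂ,
        P.totalDegree ≤ d ∧ (∀ z ∈ S, ‖eval z P‖ ≤ 1) ∧
        r = ‖eval (fun _ => (0 : ℂ)) P‖}
      ↔ ∃ A : Fin n → MvPolynomial (Fin n) ℂ,
          (∑ k, MvPolynomial.X k * A k).totalDegree ≤ d ∧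
          ∀ z ∈ S, ‖1 - ∑ k, z k * eval z (A k)‖ ≤ 1 / M ^ d := by
  change M ^ d ≤ sSup (unitBallEvalNorms S d 0) ↔ _
  have hMd : 0 < M ^ d := pow_pos (zero_lt_one.trans_le hM) d
  obtain ⟨r, hr⟩ := exists_isGreatest_unitBallEvalNorms hS hna d 0
  rw [hr.csSup_eq]
  constructor
  · intro hMr
    obtain ⟨P, hP, hPS, rfl⟩ := hr.1
    exact exists_norm_one_sub_sum_le_of_le_norm_eval_zero hP hPS hMd hMr
  · rintro ⟨A, hA, hAS⟩
    exact hr.2 (mem_unitBallEvalNorms_zero_of_norm_one_sub_sum_le hA hMd.le hAS)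
end

section
/- Let V be a closed one-dimensional complex submanifold of ℂⁿ, K ⊆ V compact with K̂ ⊆ V, and suppose that on every connected component of V \ K, the extremal function Λ_K is either identically +∞ or locally bounded. Then K̂ is a closed subset of ℂⁿ. -/
open MvPolynomial

/-- The extremal function Λ_K(x) = sup (1/d) log |P(x)| over d ≥ 1 and
polynomials P of degree ≤ d with sup_K |P| ≤ 1, with values in EReal.
The projective hull is K̂ = {x : Λ_K(x) < ∞}. -/
noncomputable def LamK (n : ℕ) (K : Set (Fin n → ℂ)) (x : Fin n → ℂ) : EReal :=
  ⨆ q : {q : ℕ × MvPolynomial (Fin n) ℂ // 1 ≤ q.1 ∧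
      q.2.totalDegree ≤ q.1 ∧ ∀ w ∈ K, ‖eval w q.2‖ ≤ 1},
    (((1 : ℝ) / (q : ℕ × MvPolynomial (Fin n) ℂ).1 *
      Real.log ‖eval x (q : ℕ × MvPolynomial (Fin n) ℂ).2‖ : ℝ) : EReal)

/-!
A point `x` of the closure of `K̂` lies in `V`. If `x ∈ K` then `Λ_K(x) ≤ 0`. Otherwise look
at the component `Ω` of `V \ K` through `x`: if `Λ_K` is locally bounded there, then `Λ_K(x)`
is finite. If `Λ_K ≡ +∞` on `Ω`, then `Ω` contains the image of a small connected disc of a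
chart at `x`, which is a neighbourhood of `x` in `V`; since `K̂ ⊆ V`, points of `K̂`
approaching `x` eventually lie in `Ω`, where `Λ_K = +∞`, which is absurd.
-/

lemma LamK_nonpos_of_mem {n : ℕ} {K : Set (Fin n → ℂ)} {x : Fin n → ℂ} (hx : x ∈ K) :
    LamK n K x ≤ 0 := by
  refine iSup_le fun q => EReal.coe_nonpos.mpr ?_
  exact mul_nonpos_of_nonneg_of_nonpos (by positivity)
    (Real.log_nonpos (norm_nonneg _) (q.prop.2.2 x hx))

lemma LamK_ne_top_of_mem {n : ℕ} {K : Set (Fin n → ℂ)} {x : Fin n → ℂ} (hx : x ∈ K) :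
    LamK n K x ≠ ⊤ :=
  ne_top_of_le_ne_top EReal.zero_ne_top (LamK_nonpos_of_mem hx)

lemma exists_isOpen_inter_subset_connectedComponentIn {X E : Type*} [TopologicalSpace X]
    [TopologicalSpace E] [LocallyConnectedSpace E] {V C : Set X} {g : E → X} {W : Set E}
    {w : E} (hW : IsOpen W) (hg : ContinuousOn g W) (hC : IsClosed C) (hw : w ∈ W)
    (hgw : g w ∉ C) (himg : ∀ s ⊆ W, IsOpen s → ∃ u : Set X, IsOpen u ∧ g '' s = V ∩ u) :
    ∃ u : Set X, IsOpen u ∧ g w ∈ u ∧ V ∩ u ⊆ connectedComponentIn (V \ C) (g w) := by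
  have hT : W ∩ g ⁻¹' Cᶜ ∈ nhds w :=
    (hg.isOpen_inter_preimage hW hC.isOpen_compl).mem_nhds ⟨hw, hgw⟩
  obtain ⟨s, hsT, hso, hws, hs⟩ :=
    locallyConnectedSpace_iff_subsets_isOpen_isConnected.mp ‹_› w _ hT
  obtain ⟨u, huo, hsu⟩ := himg s (fun z hz => (hsT hz).1) hso
  have hgs : g '' s ⊆ V \ C := by
    rintro _ ⟨z, hz, rfl⟩
    exact ⟨(hsu.subset ⟨z, hz, rfl⟩).1, (hsT hz).2⟩
  have hconn : IsPreconnected (g '' s) :=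
    hs.isPreconnected.image g (hg.mono fun z hz => (hsT hz).1)
  refine ⟨u, huo, (hsu.subset ⟨w, hws, rfl⟩).2, ?_⟩
  rw [← hsu]
  exact hconn.subset_connectedComponentIn ⟨w, hws, rfl⟩ hgs

theorem stmt_13_general (n : ℕ) (V : Set (Fin n → ℂ)) (hVc : IsClosed V)
    (hman : ∀ z ∈ V, ∃ U : Set (Fin n → ℂ), IsOpen U ∧ z ∈ U ∧
      ∃ (g : ℂ → (Fin n → ℂ)) (W : Set ℂ), IsOpen W ∧
        AnalyticOnNhd ℂ g W ∧ Set.InjOn g W ∧ g '' W = V ∩ U ∧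
        ∀ s ⊆ W, IsOpen s → ∃ u : Set (Fin n → ℂ), IsOpen u ∧ g '' s = V ∩ u)
    (K : Set (Fin n → ℂ)) (hK : IsCompact K)
    (hhull : {x | LamK n K x ≠ ⊤} ⊆ V)
    (hcomp : ∀ x ∈ V \ K,
      (∀ y ∈ connectedComponentIn (V \ K) x, LamK n K y = ⊤) ∨
      (∀ y ∈ connectedComponentIn (V \ K) x, ∃ U ∈ nhds y, ∃ B : ℝ,
        ∀ w ∈ U ∩ connectedComponentIn (V \ K) x, LamK n K w ≤ (B : EReal))) :
    IsClosed {x | LamK n K x ≠ ⊤} := by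
  refine isClosed_of_closure_subset fun x hx => ?_
  have hxV : x ∈ V := hVc.closure_subset (closure_mono hhull hx)
  by_cases hxK : x ∈ K
  · exact LamK_ne_top_of_mem hxK
  have hxΩ : x ∈ connectedComponentIn (V \ K) x := mem_connectedComponentIn ⟨hxV, hxK⟩
  rcases hcomp x ⟨hxV, hxK⟩ with htop | hbdd
  · obtain ⟨U, -, hxU, g, W, hW, hg, -, hgW, himg⟩ := hman x hxV
    obtain ⟨w, hw, rfl⟩ : x ∈ g '' W := hgW ▸ ⟨hxV, hxU⟩
    obtain ⟨u, hu, hwu, huΩ⟩ := exists_isOpen_inter_subset_connectedComponentIn hW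
      hg.continuousOn hK.isClosed hw hxK himg
    obtain ⟨y, hyu, hy⟩ := mem_closure_iff_nhds.mp hx u (hu.mem_nhds hwu)
    exact absurd (htop y (huΩ ⟨hhull hy, hyu⟩)) hy
  · obtain ⟨U, hU, B, hB⟩ := hbdd x hxΩ
    exact ne_top_of_le_ne_top (EReal.coe_ne_top B) (hB x ⟨mem_of_mem_nhds hU, hxΩ⟩)

/-- If V ⊆ ℂⁿ is a closed one-dimensional complex submanifold, K ⊆ V compact
with K̂ = {Λ_K < ∞} ⊆ V, and on every connected component of V \ K the
extremal function Λ_K is identically +∞ or locally bounded, then K̂ is closed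
in ℂⁿ. -/
theorem stmt_13 (n : ℕ) (V : Set (Fin n → ℂ)) (hVc : IsClosed V)
    (hman : ∀ z ∈ V, ∃ U : Set (Fin n → ℂ), IsOpen U ∧ z ∈ U ∧
      ∃ (g : ℂ → (Fin n → ℂ)) (W : Set ℂ), IsOpen W ∧
        AnalyticOnNhd ℂ g W ∧ Set.InjOn g W ∧ g '' W = V ∩ U ∧
        ∀ s ⊆ W, IsOpen s → ∃ u : Set (Fin n → ℂ), IsOpen u ∧ g '' s = V ∩ u)
    (K : Set (Fin n → ℂ)) (hK : IsCompact K) (hKV : K ⊆ V)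
    (hhull : {x | LamK n K x ≠ ⊤} ⊆ V)
    (hcomp : ∀ x ∈ V \ K,
      (∀ y ∈ connectedComponentIn (V \ K) x, LamK n K y = ⊤) ∨
      (∀ y ∈ connectedComponentIn (V \ K) x, ∃ U ∈ nhds y, ∃ B : ℝ,
        ∀ w ∈ U ∩ connectedComponentIn (V \ K) x, LamK n K w ≤ (B : EReal))) :
    IsClosed {x | LamK n K x ≠ ⊤} :=
  stmt_13_general n V hVc hman K hK hhull hcomp
end
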